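/- arXiv:2406.13478 — 2 statements merged into one kernel-verified Lean document; each statement's English description precedes it below -/
import Mathlib

section
/- If strong principal ignorability Y_{z,m} ⟂ U | X holds for all z ∈ {0,1} and m ∈ ℝ, then the expectation-based weak principal ignorability E(Y_z | X, U = (m₁, m₀)) = E(Y_z | X, M_z = m_z) holds for all z ∈ {0,1} and (m₁, m₀) ∈ ℝ². -/
open MeasureTheory

/-- Strong principal ignorability `Y_{z,m} ⟂ U | X` implies the expectation-based weak
principal ignorability `E(Y_z | X, U = (m₁, m₀)) = E(Y_z | X, M_z = m_z)`.

The conditional model given `X = x` is described by densities: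
`eU x u` is the conditional density of `U = (M₁, M₀)` given `X = x`;
`p z m x u y` is the conditional density of `(U, Y_{z,m})` given `X = x`;
`r z x u y` is the conditional density of `(U, Y_z)` given `X = x`, which by the consistency
`Y_z = Y_{z,M_z}` satisfies `r z x (m₁,m₀) y = p z m_z x (m₁,m₀) y`.  Strong principal
ignorability is the factorization `p z m x u y = eU x u * q z m x y`.  Conditional
expectations given values are ratios of integrals against these densities. -/
theorem stmt6
    {𝓧 : Type*}
    (eU : 𝓧 → ℝ × ℝ → ℝ)
    (p : Bool → ℝ → 𝓧 → ℝ × ℝ → ℝ → ℝ)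
    (r : Bool → 𝓧 → ℝ × ℝ → ℝ → ℝ)
    -- consistency Y_z = Y_{z, M_z}
    (hr : ∀ z x m₁ m₀ y, r z x (m₁, m₀) y = p z (if z then m₁ else m₀) x (m₁, m₀) y)
    -- p has U-marginal eU
    (hmarg : ∀ z m x u, (∫ y, p z m x u y) = eU x u)
    -- strong principal ignorability: Y_{z,m} ⟂ U | X (density factorization)
    (q : Bool → ℝ → 𝓧 → ℝ → ℝ)
    (hSPI : ∀ z m x u y, p z m x u y = eU x u * q z m x y)
    (hepos : ∀ x u, 0 < eU x u)
    (heint1 : ∀ x m₁, Integrable fun m₀ => eU x (m₁, m₀))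
    (heint0 : ∀ x m₀, Integrable fun m₁ => eU x (m₁, m₀)) :
    -- weak principal ignorability: for all z ∈ {0,1} and (m₁, m₀) ∈ ℝ²,
    -- E(Y_z | X = x, U = (m₁, m₀)) = E(Y_z | X = x, M_z = m_z)
    ∀ (z : Bool) (x : 𝓧) (m₁ m₀ : ℝ),
      0 < (∫ y, r z x (m₁, m₀) y) →
      0 < (if z then (∫ y, (∫ m₀', r true x (m₁, m₀') y))
            else (∫ y, (∫ m₁', r false x (m₁', m₀) y))) →
      (∫ y, y * r z x (m₁, m₀) y) / (∫ y, r z x (m₁, m₀) y)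
        = (if z then
            (∫ y, y * (∫ m₀', r true x (m₁, m₀') y))
              / (∫ y, (∫ m₀', r true x (m₁, m₀') y))
          else
            (∫ y, y * (∫ m₁', r false x (m₁', m₀) y))
              / (∫ y, (∫ m₁', r false x (m₁', m₀) y))) := by
  intro z x m₁ m₀ h1 h2
  cases z with
  | true =>
    simp only [if_true] at h2 ⊢
    have hk : ∀ y, r true x (m₁, m₀) y = eU x (m₁, m₀) * q true m₁ x y := by
      intro y; rw [hr]; simp [hSPI]
    have hin : ∀ y, (∫ m₀', r true x (m₁, m₀') y)
        = (∫ m₀', eU x (m₁, m₀')) * q true m₁ x y := by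
      intro y
      have : ∀ m₀', r true x (m₁, m₀') y = eU x (m₁, m₀') * q true m₁ x y := by
        intro m₀'; rw [hr]; simp [hSPI]
      simp_rw [this]
      exact integral_mul_const _ _
    have key : ∀ (c : ℝ) (f : ℝ → ℝ), (∫ y, y * (c * f y)) = c * ∫ y, y * f y := by
      intro c f
      rw [← integral_const_mul]
      congr 1; ext y; ring
    simp_rw [hin, integral_const_mul] at h2
    simp_rw [hk, hin, key, integral_const_mul]
    have hc : eU x (m₁, m₀) ≠ 0 := (hepos x _).ne'
    have hC : (∫ m₀', eU x (m₁, m₀')) ≠ 0 := by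
      intro h; rw [h] at h2; simp at h2
    rw [mul_div_mul_left _ _ hc, mul_div_mul_left _ _ hC]
  | false =>
    simp only [Bool.false_eq_true, if_false] at h2 ⊢
    have hk : ∀ y, r false x (m₁, m₀) y = eU x (m₁, m₀) * q false m₀ x y := by
      intro y; rw [hr]; simp [hSPI]
    have hin : ∀ y, (∫ m₁', r false x (m₁', m₀) y)
        = (∫ m₁', eU x (m₁', m₀)) * q false m₀ x y := by
      intro y
      have : ∀ m₁', r false x (m₁', m₀) y = eU x (m₁', m₀) * q false m₀ x y := by
        intro m₁'; rw [hr]; simp [hSPI]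
      simp_rw [this]
      exact integral_mul_const _ _
    have key : ∀ (c : ℝ) (f : ℝ → ℝ), (∫ y, y * (c * f y)) = c * ∫ y, y * f y := by
      intro c f
      rw [← integral_const_mul]
      congr 1; ext y; ring
    simp_rw [hin, integral_const_mul] at h2
    simp_rw [hk, hin, key, integral_const_mul]
    have hc : eU x (m₁, m₀) ≠ 0 := (hepos x _).ne'
    have hC : (∫ m₁', eU x (m₁', m₀)) ≠ 0 := by
      intro h; rw [h] at h2; simp at h2
    rw [mul_div_mul_left _ _ hc, mul_div_mul_left _ _ hC]
end

section
/- In a randomized setting with no covariates, if either (a) Y₁ ⟂ M₀ | M₁ and Y₀ ⟂ M₁ | M₀, or (b) (Y₁, M₁) ⟂ (Y₀, M₀), then for z ∈ {0,1} the conditional distribution of Y_z given M_z = m_z equals the conditional distribution of Y_z given U = (m₁, m₀), and hence E(Y_z | M_z = m_z) = E(Y_z | U = (m₁, m₀)) for all (m₁, m₀) ∈ ℝ². -/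
open MeasureTheory

/-- In a randomized setting with no covariates: if either
(a) `Y₁ ⟂ M₀ | M₁` and `Y₀ ⟂ M₁ | M₀` (Parast et al.), or
(b) `(Y₁, M₁) ⟂ (Y₀, M₀)` (Wang et al.),
then for `z ∈ {0,1}` the conditional distribution of `Y_z` given `M_z = m_z` equals the
conditional distribution of `Y_z` given `U = (m₁, m₀)`, and hence
`E(Y_z | M_z = m_z) = E(Y_z | U = (m₁, m₀))` for all `(m₁, m₀) ∈ ℝ²`.

`f m₁ m₀ y₁ y₀` is the joint density of `(M₁, M₀, Y₁, Y₀)`; conditional independence is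
expressed in cross-multiplied density form, and conditional distributions / expectations as
ratios of integrals. -/
theorem stmt8
    (f : ℝ → ℝ → ℝ → ℝ → ℝ)
    (hf_nonneg : ∀ m₁ m₀ y₁ y₀, 0 ≤ f m₁ m₀ y₁ y₀)
    -- all conditional distributions are well defined
    (hposU : ∀ m₁ m₀, 0 < (∫ y₁, (∫ y₀, f m₁ m₀ y₁ y₀)))
    (hposM1 : ∀ m₁, 0 < (∫ m₀, (∫ y₁, (∫ y₀, f m₁ m₀ y₁ y₀))))
    (hposM0 : ∀ m₀, 0 < (∫ m₁, (∫ y₁, (∫ y₀, f m₁ m₀ y₁ y₀))))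
    -- (a) or (b)
    (hyp :
      -- (a)  Y₁ ⟂ M₀ | M₁  and  Y₀ ⟂ M₁ | M₀
      ((∀ m₁ m₀ y₁,
          (∫ y₀, f m₁ m₀ y₁ y₀) * (∫ m₀', (∫ y₁', (∫ y₀', f m₁ m₀' y₁' y₀')))
            = (∫ y₁', (∫ y₀', f m₁ m₀ y₁' y₀')) * (∫ m₀', (∫ y₀', f m₁ m₀' y₁ y₀')))
        ∧ (∀ m₁ m₀ y₀,
          (∫ y₁, f m₁ m₀ y₁ y₀) * (∫ m₁', (∫ y₁', (∫ y₀', f m₁' m₀ y₁' y₀')))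
            = (∫ y₁', (∫ y₀', f m₁ m₀ y₁' y₀')) * (∫ m₁', (∫ y₁', f m₁' m₀ y₁' y₀))))
      ∨
      -- (b)  (Y₁, M₁) ⟂ (Y₀, M₀)
      (∃ g h : ℝ → ℝ → ℝ, ∀ m₁ m₀ y₁ y₀, f m₁ m₀ y₁ y₀ = g m₁ y₁ * h m₀ y₀)) :
    ∀ m₁ m₀ : ℝ,
      -- conditional density of Y₁ given U = (m₁, m₀) equals that given M₁ = m₁
      (∀ y₁, (∫ y₀, f m₁ m₀ y₁ y₀) / (∫ y₁', (∫ y₀, f m₁ m₀ y₁' y₀))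
          = (∫ m₀', (∫ y₀, f m₁ m₀' y₁ y₀)) / (∫ m₀', (∫ y₁', (∫ y₀, f m₁ m₀' y₁' y₀))))
      -- conditional density of Y₀ given U = (m₁, m₀) equals that given M₀ = m₀
      ∧ (∀ y₀, (∫ y₁, f m₁ m₀ y₁ y₀) / (∫ y₀', (∫ y₁, f m₁ m₀ y₁ y₀'))
          = (∫ m₁', (∫ y₁, f m₁' m₀ y₁ y₀)) / (∫ m₁', (∫ y₀', (∫ y₁, f m₁' m₀ y₁ y₀'))))
      -- E(Y₁ | U = (m₁, m₀)) = E(Y₁ | M₁ = m₁)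
      ∧ ((∫ y₁, y₁ * (∫ y₀, f m₁ m₀ y₁ y₀)) / (∫ y₁, (∫ y₀, f m₁ m₀ y₁ y₀))
          = (∫ y₁, y₁ * (∫ m₀', (∫ y₀, f m₁ m₀' y₁ y₀)))
            / (∫ y₁, (∫ m₀', (∫ y₀, f m₁ m₀' y₁ y₀))))
      -- E(Y₀ | U = (m₁, m₀)) = E(Y₀ | M₀ = m₀)
      ∧ ((∫ y₀, y₀ * (∫ y₁, f m₁ m₀ y₁ y₀)) / (∫ y₀, (∫ y₁, f m₁ m₀ y₁ y₀))
          = (∫ y₀, y₀ * (∫ m₁', (∫ y₁, f m₁' m₀ y₁ y₀)))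
            / (∫ y₀, (∫ m₁', (∫ y₁, f m₁' m₀ y₁ y₀)))) := by
  intro m₁ m₀
  rcases hyp with ⟨ha1, ha2⟩ | ⟨g, h, hgh⟩
  · -- case (a)
    have hD : (0:ℝ) < (∫ y₁', (∫ y₀, f m₁ m₀ y₁' y₀)) := hposU m₁ m₀
    have hP : (0:ℝ) < (∫ m₀', (∫ y₁', (∫ y₀, f m₁ m₀' y₁' y₀))) := hposM1 m₁
    have hPm0 : (0:ℝ) < (∫ m₁', (∫ y₁', (∫ y₀', f m₁' m₀ y₁' y₀'))) := hposM0 m₀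
    -- From (a1):  B y₁ = (P/D) * A y₁
    have hB : ∀ y₁, (∫ m₀', (∫ y₀, f m₁ m₀' y₁ y₀))
        = ((∫ m₀', (∫ y₁', (∫ y₀, f m₁ m₀' y₁' y₀))) / (∫ y₁', (∫ y₀, f m₁ m₀ y₁' y₀)))
          * (∫ y₀, f m₁ m₀ y₁ y₀) := by
      intro y₁
      rw [div_mul_eq_mul_div, eq_div_iff hD.ne']
      linear_combination -(ha1 m₁ m₀ y₁)
    -- From (a2):  A0 m₁' y₀ = (D m₁' / Pm0) * Bm0 y₀
    have hA0 : ∀ m₁' y₀, (∫ y₁, f m₁' m₀ y₁ y₀)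
        = ((∫ y₁', (∫ y₀', f m₁' m₀ y₁' y₀')) / (∫ m₁'', (∫ y₁', (∫ y₀', f m₁'' m₀ y₁' y₀'))))
          * (∫ m₁'', (∫ y₁', f m₁'' m₀ y₁' y₀)) := by
      intro m₁' y₀
      rw [div_mul_eq_mul_div, eq_div_iff hPm0.ne']
      linear_combination ha2 m₁' m₀ y₀
    -- integrate over y₀ :  D0 m₁' = (D m₁'/Pm0) * Q
    have hD0 : ∀ m₁', (∫ y₀', (∫ y₁, f m₁' m₀ y₁ y₀'))
        = ((∫ y₁', (∫ y₀', f m₁' m₀ y₁' y₀')) / (∫ m₁'', (∫ y₁', (∫ y₀', f m₁'' m₀ y₁' y₀'))))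
          * (∫ y₀, (∫ m₁'', (∫ y₁', f m₁'' m₀ y₁' y₀))) := by
      intro m₁'
      rw [← integral_const_mul]
      congr 1 with y₀
      exact hA0 m₁' y₀
    -- integrate over m₁' :  P0' = Q
    have hP0 : (∫ m₁', (∫ y₀', (∫ y₁, f m₁' m₀ y₁ y₀')))
        = (∫ y₀, (∫ m₁'', (∫ y₁', f m₁'' m₀ y₁' y₀))) := by
      have e1 : (∫ m₁', (∫ y₀', (∫ y₁, f m₁' m₀ y₁ y₀')))
          = ∫ m₁', (((∫ y₁', (∫ y₀', f m₁' m₀ y₁' y₀'))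
              / (∫ m₁'', (∫ y₁', (∫ y₀', f m₁'' m₀ y₁' y₀'))))
            * (∫ y₀, (∫ m₁'', (∫ y₁', f m₁'' m₀ y₁' y₀)))) := by
        congr 1 with m₁'
        exact hD0 m₁'
      rw [e1, integral_mul_const, integral_div, div_self hPm0.ne', one_mul]
    have hDPm0 : ((∫ y₁', (∫ y₀', f m₁ m₀ y₁' y₀'))
        / (∫ m₁'', (∫ y₁', (∫ y₀', f m₁'' m₀ y₁' y₀')))) ≠ 0 :=
      div_ne_zero hD.ne' hPm0.ne'
    have hPD : ((∫ m₀', (∫ y₁', (∫ y₀, f m₁ m₀' y₁' y₀)))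
        / (∫ y₁', (∫ y₀, f m₁ m₀ y₁' y₀))) ≠ 0 :=
      div_ne_zero hP.ne' hD.ne'
    refine ⟨?_, ?_, ?_, ?_⟩
    · intro y₁
      rw [hB y₁]
      field_simp
    · intro y₀
      rw [hA0 m₁ y₀, hD0 m₁, hP0, mul_div_mul_left _ _ hDPm0]
    · have hnum : (∫ y₁, y₁ * (∫ m₀', (∫ y₀, f m₁ m₀' y₁ y₀)))
          = ((∫ m₀', (∫ y₁', (∫ y₀, f m₁ m₀' y₁' y₀))) / (∫ y₁', (∫ y₀, f m₁ m₀ y₁' y₀)))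
            * (∫ y₁, y₁ * (∫ y₀, f m₁ m₀ y₁ y₀)) := by
        rw [← integral_const_mul]
        congr 1 with y₁
        rw [hB y₁]; ring
      have hden : (∫ y₁, (∫ m₀', (∫ y₀, f m₁ m₀' y₁ y₀)))
          = ((∫ m₀', (∫ y₁', (∫ y₀, f m₁ m₀' y₁' y₀))) / (∫ y₁', (∫ y₀, f m₁ m₀ y₁' y₀)))
            * (∫ y₁, (∫ y₀, f m₁ m₀ y₁ y₀)) := by
        rw [← integral_const_mul]
        congr 1 with y₁
        exact hB y₁
      rw [hnum, hden, mul_div_mul_left _ _ hPD]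
    · have hnum : (∫ y₀, y₀ * (∫ y₁, f m₁ m₀ y₁ y₀))
          = ((∫ y₁', (∫ y₀', f m₁ m₀ y₁' y₀'))
              / (∫ m₁'', (∫ y₁', (∫ y₀', f m₁'' m₀ y₁' y₀'))))
            * (∫ y₀, y₀ * (∫ m₁'', (∫ y₁', f m₁'' m₀ y₁' y₀))) := by
        rw [← integral_const_mul]
        congr 1 with y₀
        rw [hA0 m₁ y₀]; ring
      rw [hnum, hD0 m₁, mul_div_mul_left _ _ hDPm0]
  · -- case (b): f factors
    have key : ∀ a b, (∫ y₁, (∫ y₀, f a b y₁ y₀))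
        = (∫ y₁, g a y₁) * (∫ y₀, h b y₀) := by
      intro a b
      simp only [hgh, integral_const_mul, integral_mul_const]
    have hGH := hposU m₁ m₀
    rw [key] at hGH
    have hG : (∫ y₁, g m₁ y₁) ≠ 0 := by
      intro h0; rw [h0, zero_mul] at hGH; exact lt_irrefl _ hGH
    have hH : (∫ y₀, h m₀ y₀) ≠ 0 := by
      intro h0; rw [h0, mul_zero] at hGH; exact lt_irrefl _ hGH
    have hPb := hposM1 m₁
    simp only [key, integral_const_mul] at hPb
    have hHH : (∫ m₀', (∫ y₀, h m₀' y₀)) ≠ 0 := by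
      intro h0; rw [h0, mul_zero] at hPb; exact lt_irrefl _ hPb
    have hPb0 := hposM0 m₀
    simp only [key, integral_mul_const] at hPb0
    have hGG : (∫ m₁', (∫ y₁, g m₁' y₁)) ≠ 0 := by
      intro h0; rw [h0, zero_mul] at hPb0; exact lt_irrefl _ hPb0
    refine ⟨?_, ?_, ?_, ?_⟩
    · intro y₁
      simp only [hgh, integral_const_mul, integral_mul_const]
      rw [mul_div_mul_right _ _ hH, mul_div_mul_right _ _ hHH]
    · intro y₀
      simp only [hgh, integral_const_mul, integral_mul_const]
      rw [mul_div_mul_left _ _ hG, mul_div_mul_left _ _ hGG]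
    · simp only [hgh, integral_const_mul, integral_mul_const]
      have e1 : (∫ y₁, y₁ * (g m₁ y₁ * (∫ y₀, h m₀ y₀)))
          = (∫ y₁, y₁ * g m₁ y₁) * (∫ y₀, h m₀ y₀) := by
        rw [← integral_mul_const]; congr 1 with y; ring
      have e2 : (∫ y₁, y₁ * (g m₁ y₁ * (∫ m₀', (∫ y₀, h m₀' y₀))))
          = (∫ y₁, y₁ * g m₁ y₁) * (∫ m₀', (∫ y₀, h m₀' y₀)) := by
        rw [← integral_mul_const]; congr 1 with y; ring
      rw [e1, e2, mul_div_mul_right _ _ hH, mul_div_mul_right _ _ hHH]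
    · simp only [hgh, integral_const_mul, integral_mul_const]
      have e1 : (∫ y₀, y₀ * ((∫ y₁, g m₁ y₁) * h m₀ y₀))
          = (∫ y₁, g m₁ y₁) * (∫ y₀, y₀ * h m₀ y₀) := by
        rw [← integral_const_mul]; congr 1 with y; ring
      have e2 : (∫ y₀, y₀ * ((∫ m₁', (∫ y₁, g m₁' y₁)) * h m₀ y₀))
          = (∫ m₁', (∫ y₁, g m₁' y₁)) * (∫ y₀, y₀ * h m₀ y₀) := by
        rw [← integral_const_mul]; congr 1 with y; ring
      rw [e1, e2, mul_div_mul_left _ _ hG, mul_div_mul_left _ _ hGG]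
end
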